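/- In the tight example (n = k+1 agents, resource R₀ of value 1 available to all, k private resources of value 1 − D/k each for one compromised agent, 0 ≤ D ≤ k−1), the minimal ℓ1 perturbation making an optimal profile a Nash equilibrium equals D: raising each private resource's value by D/k makes the optimal profile an equilibrium, and no smaller total perturbation suffices. -/

import Mathlib

open Finset

variable {N R : Type} [Fintype N] [DecidableEq N] [Fintype R] [DecidableEq R]

/-- Welfare of the set of resources selected by agents in `J` under profile `a`. -/
def coveredValue (v : R → ℝ) (a : N → R) (J : Finset N) : ℝ :=
  ∑ r ∈ J.image a, v r

/-- Marginal-contribution utility: `U_i(a) = W(a) - W(∅, a_{-i})`. -/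
def utility (v : R → ℝ) (a : N → R) (i : N) : ℝ :=
  coveredValue v a Finset.univ - coveredValue v a (Finset.univ.erase i)

/-- A joint action profile: each agent selects an admissible resource. -/
def isProfile (A : N → Finset R) (a : N → R) : Prop :=
  ∀ i, a i ∈ A i

/-- Pure Nash equilibrium with compromised agent set `K`: normal agents have no
profitable unilateral deviation w.r.t. marginal-contribution utilities, and each
compromised agent selects a maximum-value resource of its action set. -/
def isNE (A : N → Finset R) (K : Finset N) (v : R → ℝ) (a : N → R) : Prop :=
  isProfile A a ∧
  (∀ i, i ∉ K → ∀ b ∈ A i, utility v (Function.update a i b) i ≤ utility v a i) ∧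
  (∀ j ∈ K, ∀ r ∈ A j, v r ≤ v (a j))

/-- Optimal welfare of the game. -/
noncomputable def optWelfare (A : N → Finset R) (v : R → ℝ) : ℝ :=
  sSup {w | ∃ a, isProfile A a ∧ w = coveredValue v a Finset.univ}

/-- Worst-case Nash equilibrium welfare. -/
noncomputable def worstNEWelfare (A : N → Finset R) (K : Finset N) (v : R → ℝ) : ℝ :=
  sInf {w | ∃ a, isNE A K v a ∧ w = coveredValue v a Finset.univ}

/-- Price of anarchy. -/
noncomputable def PoA (A : N → Finset R) (K : Finset N) (v : R → ℝ) : ℝ :=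
  worstNEWelfare A K v / optWelfare A v

/-- `PoS(G) = 1`: some Nash equilibrium is welfare-optimal. -/
def PoSoneHolds (A : N → Finset R) (K : Finset N) (v : R → ℝ) : Prop :=
  ∃ a, isNE A K v a ∧
    ∀ b, isProfile A b → coveredValue v b Finset.univ ≤ coveredValue v a Finset.univ

/-- Distance of the game: minimal ℓ1-norm of a nonnegative perturbation of the
resource values yielding a game with an optimal Nash equilibrium. -/
noncomputable def gameDist (A : N → Finset R) (K : Finset N) (v : R → ℝ) : ℝ :=
  sInf {c | ∃ p : R → ℝ, (∀ r, 0 ≤ p r) ∧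
    PoSoneHolds A K (fun r => v r + p r) ∧ c = ∑ r, p r}

/-! In an optimal profile under positive values every resource is covered, so a compromised
agent `j` must keep its private resource `j` while agent `0` sits on `R₀`. Being a maximal-value
choice, `j` must then be perturbed up by at least the gap `D / k`, which costs `D` over the `k`
compromised agents; raising every private resource by exactly `D / k` equalizes all values and
makes the identity profile an optimal equilibrium. -/

omit [Fintype N] [DecidableEq N] in
theorem coveredValue_le_sum (v : R → ℝ) (hv : ∀ r, 0 ≤ v r) (a : N → R) (J : Finset N) :
    coveredValue v a J ≤ ∑ r, v r :=
  sum_le_sum_of_subset_of_nonneg (subset_univ _) fun r _ _ => hv r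

omit [DecidableEq N] in
theorem coveredValue_univ_of_surjective (v : R → ℝ) {a : N → R} (ha : Function.Surjective a) :
    coveredValue v a univ = ∑ r, v r := by
  rw [coveredValue, image_univ_of_surjective ha]

omit [DecidableEq N] in
theorem surjective_of_sum_le_coveredValue {v : R → ℝ} (hv : ∀ r, 0 < v r) {a : N → R}
    (h : ∑ r, v r ≤ coveredValue v a univ) : Function.Surjective a := by
  by_contra hns
  have hmissing : (univ \ univ.image a).Nonempty := by
    obtain ⟨r, hr⟩ : ∃ r, ∀ i, a i ≠ r := by simpa [Function.Surjective] using hns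
    exact ⟨r, by simpa using hr⟩
  have hsplit := sum_sdiff (f := v) (subset_univ (univ.image a))
  have hpos : 0 < ∑ r ∈ univ \ univ.image a, v r := sum_pos (fun r _ => hv r) hmissing
  rw [coveredValue] at h
  linarith

theorem PoSoneHolds.exists_isNE_surjective {A : N → Finset R} {K : Finset N} {v : R → ℝ}
    (h : PoSoneHolds A K v) (hv : ∀ r, 0 < v r) {b : N → R} (hb : isProfile A b)
    (hbs : Function.Surjective b) : ∃ a, isNE A K v a ∧ Function.Surjective a := by
  obtain ⟨a, hNE, hopt⟩ := h
  refine ⟨a, hNE, surjective_of_sum_le_coveredValue hv ?_⟩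
  rw [← coveredValue_univ_of_surjective v hbs]
  exact hopt b hb

namespace TightExample

def actions (k : ℕ) (i : Fin (k + 1)) : Finset (Fin (k + 1)) :=
  if i = 0 then {0} else {0, i}

def compromised (k : ℕ) : Finset (Fin (k + 1)) :=
  univ.erase 0

noncomputable def values (k : ℕ) (D : ℝ) (r : Fin (k + 1)) : ℝ :=
  if r = 0 then 1 else 1 - D / k

noncomputable def shift (k : ℕ) (D : ℝ) (r : Fin (k + 1)) : ℝ :=
  if r = 0 then 0 else D / k

theorem isProfile_id (k : ℕ) : isProfile (actions k) id := by
  intro i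
  by_cases hi : i = 0 <;> simp [actions, hi]

theorem eq_self_of_isProfile_of_injective {k : ℕ} {a : Fin (k + 1) → Fin (k + 1)}
    (ha : isProfile (actions k) a) (hinj : Function.Injective a) {j : Fin (k + 1)} (hj : j ≠ 0) :
    a j = j := by
  have ha0 : a 0 = 0 := by simpa [actions] using ha 0
  have haj : a j = 0 ∨ a j = j := by simpa [actions, hj] using ha j
  exact haj.resolve_left fun h => hj (hinj (h.trans ha0.symm))

theorem shift_nonneg {k : ℕ} {D : ℝ} (hD : 0 ≤ D) (r : Fin (k + 1)) : 0 ≤ shift k D r := by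
  unfold shift
  split_ifs
  · exact le_rfl
  · positivity

theorem sum_shift {k : ℕ} (hk : (k : ℝ) ≠ 0) (D : ℝ) : ∑ r, shift k D r = D := by
  simp only [shift, Fin.sum_univ_succ, if_pos, Fin.succ_ne_zero, if_false, sum_const, card_univ,
    Fintype.card_fin, nsmul_eq_mul, zero_add]
  exact mul_div_cancel₀ D hk

theorem values_add_shift (k : ℕ) (D : ℝ) (r : Fin (k + 1)) : values k D r + shift k D r = 1 := by
  unfold values shift
  split_ifs <;> ring

theorem PoSoneHolds_values_add_shift (k : ℕ) (D : ℝ) :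
    PoSoneHolds (actions k) (compromised k) (fun r => values k D r + shift k D r) := by
  simp only [values_add_shift]
  refine ⟨id, ⟨isProfile_id k, ?normal, fun _ _ _ _ => le_rfl⟩, ?optimal⟩
  case normal =>
    intro i hi b hb
    obtain rfl : i = 0 := by simpa [compromised] using hi
    obtain rfl : b = 0 := by simpa [actions] using hb
    exact (congrArg (utility _ · 0) (Function.update_eq_self 0 id)).le
  case optimal =>
    intro b _
    rw [coveredValue_univ_of_surjective _ Function.surjective_id]
    exact coveredValue_le_sum _ (fun _ => zero_le_one) b univ

theorem le_sum_of_PoSoneHolds {k : ℕ} {D : ℝ} (hD0 : 0 ≤ D) (hDk : D ≤ (k : ℝ) - 1)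
    {p : Fin (k + 1) → ℝ} (hp : ∀ r, 0 ≤ p r)
    (h : PoSoneHolds (actions k) (compromised k) (fun r => values k D r + p r)) :
    D ≤ ∑ r, p r := by
  have hk : (0 : ℝ) < k := by linarith
  have hgap : D / k < 1 := (div_lt_one hk).mpr (by linarith)
  have hpos : ∀ r, 0 < values k D r + p r := by
    intro r
    have := hp r
    unfold values
    split_ifs <;> linarith
  obtain ⟨a, ⟨ha, -, hcomp⟩, hsurj⟩ :=
    h.exists_isNE_surjective hpos (isProfile_id k) Function.surjective_id
  have hinj : Function.Injective a := Finite.injective_iff_surjective.mpr hsurj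
  have hpj : ∀ j ∈ compromised k, D / k ≤ p j := by
    intro j hjK
    have hj : j ≠ 0 := ne_of_mem_erase hjK
    have hmax := hcomp j hjK 0 (by simp [actions, hj])
    rw [eq_self_of_isProfile_of_injective ha hinj hj] at hmax
    have := hp 0
    simp only [values, hj, if_true, if_false] at hmax
    linarith
  have hcard : #(compromised k) = k := by simp [compromised]
  calc D = ∑ _j ∈ compromised k, D / k := by
        rw [sum_const, hcard, nsmul_eq_mul, mul_div_cancel₀ D hk.ne']
    _ ≤ ∑ j ∈ compromised k, p j := sum_le_sum hpj
    _ ≤ ∑ r, p r := sum_le_sum_of_subset_of_nonneg (subset_univ _) fun r _ _ => hp r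

end TightExample

theorem tight_example_distance_general (k : ℕ) (D : ℝ)
    (hD0 : 0 ≤ D) (hDk : D ≤ (k : ℝ) - 1) :
    gameDist (N := Fin (k + 1)) (R := Fin (k + 1))
      (fun i => if i = 0 then {0} else {0, i})
      (Finset.univ.erase 0)
      (fun r => if r = 0 then 1 else 1 - D / (k : ℝ)) = D := by
  have hk : (k : ℝ) ≠ 0 := (by linarith : (0 : ℝ) < k).ne'
  refine IsLeast.csInf_eq ⟨?attained, ?lower⟩
  case attained =>
    exact ⟨TightExample.shift k D, TightExample.shift_nonneg hD0,
      TightExample.PoSoneHolds_values_add_shift k D, (TightExample.sum_shift hk D).symm⟩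
  case lower =>
    rintro c ⟨p, hp, hPoS, rfl⟩
    exact TightExample.le_sum_of_PoSoneHolds hD0 hDk hp hPoS

/-- In the tight example (one resource `R₀ = 0` of value 1 available to all,
and `k` private resources of value `1 − D/k`, one per compromised agent), the
distance of the game equals `D`. -/
theorem tight_example_distance (k : ℕ) (hk : 1 ≤ k) (D : ℝ)
    (hD0 : 0 ≤ D) (hDk : D ≤ (k : ℝ) - 1) :
    gameDist (N := Fin (k + 1)) (R := Fin (k + 1))
      (fun i => if i = 0 then {0} else {0, i})
      (Finset.univ.erase 0)
      (fun r => if r = 0 then 1 else 1 - D / (k : ℝ)) = D :=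
  tight_example_distance_general k D hD0 hDk
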